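/- arXiv:2506.03151 — 2 statements merged into one kernel-verified Lean document; each statement's English description precedes it below -/
import Mathlib

section
/- For θ ∈ (0, π/2), the derivative with respect to θ of F(θ) = ∫_{π/2−θ}^{π/2} (sin θ_⊥/π)·arccos(cos θ/sin θ_⊥) dθ_⊥ equals (sin θ/π)·∫_{π/2−θ}^{π/2} sin θ_⊥/√(sin²θ_⊥ − cos²θ) dθ_⊥. -/
set_option maxHeartbeats 1000000
open Real MeasureTheory intervalIntegral Set

lemma meo_sqrt_helper {p q : ℝ} (hq : 0 < q) (h : p^2 ≤ q^2) :
    Real.sqrt (1 - (p/q)^2) = Real.sqrt (q^2 - p^2) / q := by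
  rw [show (1:ℝ) - (p/q)^2 = (Real.sqrt (q^2-p^2)/q)^2 by
    rw [div_pow, div_pow, Real.sq_sqrt (by linarith)]; field_simp]
  exact Real.sqrt_sq (by positivity)

lemma meo_F_val (t : ℝ) (ht : t ∈ Set.Ioo 0 (Real.pi/2)) :
    ∫ x in (Real.pi/2 - t)..(Real.pi/2),
      (Real.sin x / Real.pi) * Real.arccos (Real.cos t / Real.sin x)
      = (1 - Real.cos t)/2 := by
  obtain ⟨ht0, ht2⟩ := ht
  have hpi := Real.pi_pos
  set a := Real.pi/2 - t with ha_def
  clear_value a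
  have hab : a < Real.pi/2 := by simp only [ha_def]; linarith
  have ha0 : 0 < a := by simp only [ha_def]; linarith
  have hst : 0 < Real.sin t := Real.sin_pos_of_pos_of_lt_pi ht0 (by linarith)
  have hct : 0 < Real.cos t := Real.cos_pos_of_mem_Ioo ⟨by linarith, ht2⟩
  set H : ℝ → ℝ := fun x =>
    (-Real.cos x * Real.arccos (Real.cos t / Real.sin x)
      - Real.arcsin (Real.cos t * Real.cos x / (Real.sin t * Real.sin x))
      + Real.cos t * Real.arcsin (Real.cos x / Real.sin t)) / Real.pi with hH
  have key : ∀ x ∈ Ioo a (Real.pi/2),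
      HasDerivAt H ((Real.sin x / Real.pi) * Real.arccos (Real.cos t / Real.sin x)) x := by
    intro x hx
    have h2pi : Real.pi/2 < Real.pi := by linarith
    have hcx : 0 < Real.cos x := Real.cos_pos_of_mem_Ioo ⟨by linarith [hx.1], hx.2⟩
    have hsx0 : 0 < Real.sin x :=
      Real.sin_pos_of_pos_of_lt_pi (by linarith [hx.1]) (by linarith [hx.2])
    have hcxlt : Real.cos x < Real.sin t := by
      have := Real.strictAntiOn_cos (Set.mem_Icc.2 ⟨ha0.le, by linarith [hab]⟩)
        (Set.mem_Icc.2 ⟨by linarith [hx.1, ha0], by linarith [hx.2]⟩) hx.1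
      rwa [ha_def, Real.cos_pi_div_two_sub] at this
    have hsxgt : Real.cos t < Real.sin x := by
      have := Real.strictMonoOn_sin (Set.mem_Icc.2 ⟨by linarith [ha0], hab.le⟩)
        (Set.mem_Icc.2 ⟨by linarith [hx.1, ha0], hx.2.le⟩) hx.1
      rwa [ha_def, Real.sin_pi_div_two_sub] at this
    have hw : (0:ℝ) < Real.sqrt (Real.sin t ^ 2 - Real.cos x ^ 2) := by
      apply Real.sqrt_pos.2; nlinarith
    have hsxcx : Real.sin x ^ 2 - Real.cos t ^ 2 = Real.sin t ^ 2 - Real.cos x ^ 2 := by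
      nlinarith [Real.sin_sq_add_cos_sq x, Real.sin_sq_add_cos_sq t]
    -- term A
    have hA1 : HasDerivAt (fun y => Real.cos t / Real.sin y)
        ((0 * Real.sin x - Real.cos t * Real.cos x) / Real.sin x ^ 2) x :=
      (hasDerivAt_const x (Real.cos t)).div (Real.hasDerivAt_sin x) hsx0.ne'
    have hlt : Real.cos t * Real.cos x < Real.sin t * Real.sin x := by nlinarith
    have hu1a : Real.cos t / Real.sin x ≠ -1 := by
      have h0 : (0:ℝ) < Real.cos t / Real.sin x := by positivity
      exact ne_of_gt (by linarith)
    have hu1b : Real.cos t / Real.sin x ≠ 1 :=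
      ne_of_lt (by rw [div_lt_one hsx0]; exact hsxgt)
    have hA := ((Real.hasDerivAt_arccos hu1a hu1b).comp x hA1)
    have hA2 := ((Real.hasDerivAt_cos x).neg).mul hA
    -- term B
    have hB1 : HasDerivAt (fun y => Real.cos t * Real.cos y / (Real.sin t * Real.sin y))
        ((Real.cos t * -Real.sin x * (Real.sin t * Real.sin x)
          - Real.cos t * Real.cos x * (Real.sin t * Real.cos x)) / (Real.sin t * Real.sin x) ^ 2)
        x :=
      ((Real.hasDerivAt_cos x).const_mul (Real.cos t)).div
        ((Real.hasDerivAt_sin x).const_mul (Real.sin t)) (by positivity)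
    have hu2a : Real.cos t * Real.cos x / (Real.sin t * Real.sin x) ≠ -1 := by
      have h0 : (0:ℝ) < Real.cos t * Real.cos x / (Real.sin t * Real.sin x) := by positivity
      exact ne_of_gt (by linarith)
    have hu2b : Real.cos t * Real.cos x / (Real.sin t * Real.sin x) ≠ 1 := by
      apply ne_of_lt
      rw [div_lt_one (by positivity)]
      exact hlt
    have hB := (Real.hasDerivAt_arcsin hu2a hu2b).comp x hB1
    -- term C
    have hC1 : HasDerivAt (fun y => Real.cos y / Real.sin t) (-Real.sin x / Real.sin t) x :=
      (Real.hasDerivAt_cos x).div_const _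
    have hu3a : Real.cos x / Real.sin t ≠ -1 := by
      have h0 : (0:ℝ) < Real.cos x / Real.sin t := by positivity
      exact ne_of_gt (by linarith)
    have hu3b : Real.cos x / Real.sin t ≠ 1 :=
      ne_of_lt (by rw [div_lt_one hst]; exact hcxlt)
    have hC := ((Real.hasDerivAt_arcsin hu3a hu3b).comp x hC1).const_mul (Real.cos t)
    have htot := ((hA2.sub hB).add hC).div_const Real.pi
    refine htot.congr_deriv (Eq.symm ?_)
    rw [Function.comp_def] at *
    rw [meo_sqrt_helper hsx0 (by nlinarith), meo_sqrt_helper (by positivity : (0:ℝ) < Real.sin t * Real.sin x) (by nlinarith [hlt, mul_pos hct hcx]), meo_sqrt_helper hst (by nlinarith)]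
    rw [hsxcx, show (Real.sin t * Real.sin x)^2 - (Real.cos t * Real.cos x)^2
        = Real.sin t ^ 2 - Real.cos x ^ 2 by
      linear_combination Real.sin t ^ 2 * Real.sin_sq_add_cos_sq x
        - Real.cos x ^ 2 * Real.sin_sq_add_cos_sq t]
    have hw2 : Real.sqrt (Real.sin t ^ 2 - Real.cos x ^ 2) ^ 2
        = Real.sin t ^ 2 - Real.cos x ^ 2 := Real.sq_sqrt (by nlinarith)
    set w := Real.sqrt (Real.sin t ^ 2 - Real.cos x ^ 2) with hwdef
    clear_value w
    beta_reduce
    set A := Real.arccos (Real.cos t / Real.sin x) with hAdef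
    clear_value A
    clear htot hA hA2 hB hB1 hC hC1 hA1 hH
    have hsxne := hsx0.ne'
    have hstne := hst.ne'
    have hwne := hw.ne'
    have hpine := hpi.ne'
    clear hx hcxlt hsxgt hsxcx hu1a hu1b hu2a hu2b hu3a hu3b hlt hw hwdef hAdef
    simp only [Pi.neg_apply]
    field_simp
    ring_nf
  have hsne : ∀ x ∈ Icc a (Real.pi/2), Real.sin x ≠ 0 := fun x hx =>
    (Real.sin_pos_of_pos_of_lt_pi (by linarith [hx.1]) (by linarith [hx.2, hpi])).ne'
  have hcont : ContinuousOn H (Icc a (Real.pi/2)) := by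
    apply ContinuousOn.div_const
    apply ContinuousOn.add
    apply ContinuousOn.sub
    · exact (Real.continuous_cos.continuousOn.neg).mul
        (Real.continuous_arccos.comp_continuousOn
          (continuousOn_const.div Real.continuous_sin.continuousOn hsne))
    · exact Real.continuous_arcsin.comp_continuousOn
        ((continuousOn_const.mul Real.continuous_cos.continuousOn).div
          (continuousOn_const.mul Real.continuous_sin.continuousOn)
          (fun x hx => mul_ne_zero hst.ne' (hsne x hx)))
    · exact continuousOn_const.mul
        (Real.continuous_arcsin.comp (Real.continuous_cos.div_const _)).continuousOn
  have hint : IntervalIntegrable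
      (fun x => (Real.sin x / Real.pi) * Real.arccos (Real.cos t / Real.sin x))
      volume a (Real.pi/2) := by
    apply ContinuousOn.intervalIntegrable
    rw [uIcc_of_le hab.le]
    exact ((Real.continuous_sin.continuousOn).div_const _).mul
      (Real.continuous_arccos.comp_continuousOn
        (continuousOn_const.div Real.continuous_sin.continuousOn hsne))
  rw [integral_eq_sub_of_hasDeriv_right_of_le hab.le hcont
      (fun x hx => (key x hx).hasDerivWithinAt) hint]
  have hHb : H (Real.pi/2) = 0 := by
    simp [hH, Real.cos_pi_div_two, Real.sin_pi_div_two]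
  have hHa : H a = (Real.cos t - 1)/2 := by
    rw [hH]
    simp only
    rw [ha_def, Real.cos_pi_div_two_sub, Real.sin_pi_div_two_sub, div_self hct.ne',
      show Real.cos t * Real.sin t / (Real.sin t * Real.cos t) = 1 by
        rw [mul_comm]; exact div_self (by positivity),
      div_self hst.ne', Real.arccos_one, Real.arcsin_one]
    field_simp
    ring
  rw [hHb, hHa]
  ring
lemma meo_inner (t : ℝ) (ht : t ∈ Set.Ioo 0 (Real.pi/2)) :
    ∫ x in (Real.pi/2 - t)..(Real.pi/2), Real.sin x / Real.sqrt (Real.sin x ^ 2 - Real.cos t ^ 2)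
      = Real.pi/2 := by
  obtain ⟨ht0, ht2⟩ := ht
  have hpi := Real.pi_pos
  set a := Real.pi/2 - t with ha_def
  clear_value a
  have hab : a < Real.pi/2 := by simp only [ha_def]; linarith
  have ha0 : 0 < a := by simp only [ha_def]; linarith
  have hst : 0 < Real.sin t := Real.sin_pos_of_pos_of_lt_pi ht0 (by linarith)
  set G : ℝ → ℝ := fun x => -Real.arcsin (Real.cos x / Real.sin t) with hG
  have key : ∀ x ∈ Ioo a (Real.pi/2),
      HasDerivAt G (Real.sin x / Real.sqrt (Real.sin x ^ 2 - Real.cos t ^ 2)) x := by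
    intro x hx
    have hcx : 0 < Real.cos x :=
      Real.cos_pos_of_mem_Ioo ⟨by linarith [hx.1], hx.2⟩
    have hcxlt : Real.cos x < Real.sin t := by
      have h2pi : Real.pi/2 < Real.pi := by linarith
      have := Real.strictAntiOn_cos (Set.mem_Icc.2 ⟨ha0.le, by linarith [hab, h2pi]⟩)
        (Set.mem_Icc.2 ⟨by linarith [hx.1, ha0], by linarith [hx.2, h2pi]⟩) hx.1
      rwa [ha_def, Real.cos_pi_div_two_sub] at this
    have hw : (0:ℝ) < Real.sqrt (Real.sin t ^ 2 - Real.cos x ^ 2) := by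
      apply Real.sqrt_pos.2; nlinarith
    have h1 : HasDerivAt (fun y => Real.cos y / Real.sin t) (-Real.sin x / Real.sin t) x :=
      (Real.hasDerivAt_cos x).div_const _
    have hlt1 : Real.cos x / Real.sin t < 1 := by rw [div_lt_one hst]; exact hcxlt
    have hgt : (0:ℝ) < Real.cos x / Real.sin t := by positivity
    have h2 := ((Real.hasDerivAt_arcsin (by linarith) (ne_of_lt hlt1)).comp x h1).neg
    refine h2.congr_deriv (Eq.symm ?_)
    rw [meo_sqrt_helper hst (by nlinarith)]
    have hsxcx : Real.sin x ^ 2 - Real.cos t ^ 2 = Real.sin t ^ 2 - Real.cos x ^ 2 := by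
      nlinarith [Real.sin_sq_add_cos_sq x, Real.sin_sq_add_cos_sq t]
    rw [hsxcx]
    field_simp
  have hpos : ∀ x ∈ Ioo a (Real.pi/2),
      0 ≤ Real.sin x / Real.sqrt (Real.sin x ^ 2 - Real.cos t ^ 2) := by
    intro x hx
    have : 0 < Real.sin x := Real.sin_pos_of_pos_of_lt_pi (by linarith [hx.1]) (by linarith [hx.2])
    positivity
  have hcont : ContinuousOn G (Icc a (Real.pi/2)) :=
    (Real.continuous_arcsin.comp (Real.continuous_cos.div_const _)).neg.continuousOn
  have hint : IntervalIntegrable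
      (fun x => Real.sin x / Real.sqrt (Real.sin x ^ 2 - Real.cos t ^ 2)) volume a (Real.pi/2) := by
    apply intervalIntegrable_deriv_of_nonneg (g := G)
    · rwa [uIcc_of_le hab.le]
    · simpa [min_eq_left hab.le, max_eq_right hab.le] using key
    · simpa [min_eq_left hab.le, max_eq_right hab.le] using hpos
  rw [integral_eq_sub_of_hasDeriv_right_of_le hab.le hcont
      (fun x hx => (key x hx).hasDerivWithinAt) hint]
  simp only [hG, ha_def, Real.cos_pi_div_two, Real.cos_pi_div_two_sub, zero_div, Real.arcsin_zero,
    div_self hst.ne', Real.arcsin_one]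
  ring

/-- for `θ ∈ (0, π/2)`, the derivative of
`F(θ) = ∫_{π/2−θ}^{π/2} (sin x/π) arccos (cos θ/sin x) dx` equals
`(sin θ/π) ∫_{π/2−θ}^{π/2} sin x/√(sin²x − cos²θ) dx`. -/
theorem meo_contact_angle_pdf (θ : ℝ) (hθ : θ ∈ Set.Ioo 0 (Real.pi / 2)) :
    HasDerivAt (fun t : ℝ => ∫ x in (Real.pi / 2 - t)..(Real.pi / 2),
        (Real.sin x / Real.pi) * Real.arccos (Real.cos t / Real.sin x))
      ((Real.sin θ / Real.pi) * ∫ x in (Real.pi / 2 - θ)..(Real.pi / 2),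
        Real.sin x / Real.sqrt (Real.sin x ^ 2 - Real.cos θ ^ 2)) θ := by
  rw [meo_inner θ hθ]
  have hd : HasDerivAt (fun t : ℝ => (1 - Real.cos t)/2)
      (Real.sin θ / Real.pi * (Real.pi/2)) θ := by
    have h := ((Real.hasDerivAt_cos θ).const_sub 1).div_const 2
    refine h.congr_deriv (Eq.symm ?_)
    have hpi := Real.pi_ne_zero
    field_simp
  apply hd.congr_of_eventuallyEq
  filter_upwards [Ioo_mem_nhds hθ.1 hθ.2] with t ht
  exact meo_F_val t ht
end

section
/- The map θ ↦ cot⁻¹(cot θ − c·√(1 + cot²θ)) for fixed c = R_⊕/R_L ∈ (0,1) has inverse φ ↦ cot⁻¹( (1/(1−c²))·(cot φ + c·√(1 + cot²φ − c²)) ) on the appropriate domain; that is, if φ = cot⁻¹(cot θ − c/sin θ) with θ ∈ (0, arccos c), then θ = cot⁻¹( (cot φ + c√(1 + cot²φ − c²))/(1 − c²) ). -/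
open Real

/-- The inverse cotangent, with values in `(0, π)`. -/
noncomputable def arccot (x : ℝ) : ℝ := Real.pi / 2 - Real.arctan x

lemma cot_arccot (x : ℝ) : Real.cot (arccot x) = x := by
  rw [arccot, Real.cot_eq_cos_div_sin, Real.cos_pi_div_two_sub, Real.sin_pi_div_two_sub,
    ← Real.tan_eq_sin_div_cos, Real.tan_arctan]

lemma arccot_cot {x : ℝ} (h0 : 0 < x) (h1 : x < π) : arccot (Real.cot x) = x := by
  have : Real.cot x = Real.tan (π / 2 - x) := by
    rw [Real.cot_eq_cos_div_sin, Real.tan_eq_sin_div_cos, Real.sin_pi_div_two_sub,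
      Real.cos_pi_div_two_sub]
  rw [arccot, this, Real.arctan_tan (by linarith) (by linarith)]
  ring

/-- for `c = R⊕/R_L ∈ (0,1)`, the map
`θ ↦ arccot (cot θ − c √(1 + cot² θ))` is inverted by
`φ ↦ arccot ((cot φ + c √(1 + cot² φ − c²))/(1 − c²))`: if `θ ∈ (0, arccos c)` and
`φ = arccot (cot θ - c√(1 + cot² θ))`, then
`θ = arccot ((cot φ + c √(1 + cot² φ − c²))/(1 − c²))`. -/
theorem dome_angle_inversion (c θ φ : ℝ) (hc0 : 0 < c) (hc1 : c < 1)
    (hθ : θ ∈ Set.Ioo 0 (Real.arccos c))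
    (hφ : φ = arccot (Real.cot θ - c * Real.sqrt (1 + Real.cot θ ^ 2))) :
    θ = arccot ((Real.cot φ + c * Real.sqrt (1 + Real.cot φ ^ 2 - c ^ 2)) / (1 - c ^ 2)) := by
  obtain ⟨hθ0, hθa⟩ := hθ
  have hapi : Real.arccos c ≤ π / 2 := by
    have := Real.arccos_le_pi_div_two (x := c)
    simpa [this] using this.2 hc0.le
  have hθpi2 : θ < π / 2 := lt_of_lt_of_le hθa hapi
  have hθpi : θ < π := by linarith [Real.pi_pos]
  have hsin : 0 < Real.sin θ := Real.sin_pos_of_pos_of_lt_pi hθ0 hθpi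
  have hcos : c < Real.cos θ := by
    have := Real.cos_lt_cos_of_nonneg_of_le_pi hθ0.le
      (le_trans hapi (by linarith [Real.pi_pos])) hθa
    rwa [Real.cos_arccos (by linarith) hc1.le] at this
  set t := Real.cot θ with ht
  have htpos : 0 < t := by
    rw [ht, Real.cot_eq_cos_div_sin]
    exact div_pos (by linarith) hsin
  set s := Real.sqrt (1 + t ^ 2) with hs
  have hs2 : s ^ 2 = 1 + t ^ 2 := Real.sq_sqrt (by positivity)
  have hsnn : 0 ≤ s := Real.sqrt_nonneg _
  have h1 : (c * t) ^ 2 < s ^ 2 := by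
    nlinarith [mul_nonneg (by nlinarith : (0:ℝ) ≤ 1 - c ^ 2) (sq_nonneg t)]
  have hsct : c * t < s := lt_of_pow_lt_pow_left₀ 2 hsnn h1
  set u := t - c * s with hu
  have hcotφ : Real.cot φ = u := by rw [hφ, cot_arccot]
  have hsq : 1 + u ^ 2 - c ^ 2 = (s - c * t) ^ 2 := by
    rw [hu]; linear_combination (c ^ 2 - 1) * hs2
  have hsqrt : Real.sqrt (1 + u ^ 2 - c ^ 2) = s - c * t := by
    rw [hsq]; exact Real.sqrt_sq (by linarith)
  have harg : (Real.cot φ + c * Real.sqrt (1 + Real.cot φ ^ 2 - c ^ 2)) / (1 - c ^ 2) = t := by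
    rw [hcotφ, hsqrt, div_eq_iff (by nlinarith : (1:ℝ) - c ^ 2 ≠ 0), hu]
    ring
  rw [harg, ht, arccot_cot hθ0 hθpi]
end
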